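/- For every α ∈ (0, 1], set y_α = 150 if α ≤ 1/2 and y_α = 105 − 50·α if α > 1/2. Then the cubic polynomial p_α has a root in the open interval (0, 50), a root in the open interval (50, y_α), and a root in the open interval (y_α, ∞). -/

import Mathlib

noncomputable section

/-- Coefficient `c₀(α) = 1024000·(2α² + α + 2)`. -/
def c0 (α : ℝ) : ℝ := 1024000 * (2 * α ^ 2 + α + 2)

/-- Coefficient `c₁(α) = −1600·(α³·(60 − 19α) + 47α² + 136α + 36)`. -/
def c1 (α : ℝ) : ℝ := -1600 * (α ^ 3 * (60 - 19 * α) + 47 * α ^ 2 + 136 * α + 36)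

/-- Coefficient `c₂(α) = 20·(α³·(222 − 35α³) + (16 − 15α⁵) + 12α⁴ + 188α² + 112α)`. -/
def c2 (α : ℝ) : ℝ :=
  20 * (α ^ 3 * (222 - 35 * α ^ 3) + (16 - 15 * α ^ 5) + 12 * α ^ 4 + 188 * α ^ 2 + 112 * α)

/-- Coefficient `c₃(α) = −(α⁴·(26 − 21α) + α²·(41 − 31α) + 52α + 8)·α²`. -/
def c3 (α : ℝ) : ℝ := -((α ^ 4 * (26 - 21 * α) + α ^ 2 * (41 - 31 * α) + 52 * α + 8) * α ^ 2)

/-- The cubic polynomial `p_α(x) = c₀(α) + c₁(α)·x + c₂(α)·x² + c₃(α)·x³`. -/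
def p (α x : ℝ) : ℝ := c0 α + c1 α * x + c2 α * x ^ 2 + c3 α * x ^ 3

/-- For `α ∈ (0,1]`, set `y_α = 150` if `α ≤ 1/2` and `y_α = 105 − 50·α` otherwise. -/
def y (α : ℝ) : ℝ := if α ≤ 1 / 2 then 150 else 105 - 50 * α

/-!
`p_α` is positive at `0`, negative at `50` and positive at `y_α`, while its leading coefficient
`c₃(α)` is negative, so `p_α → -∞`. The intermediate value theorem gives the three roots.
-/

open Filter Polynomial

theorem exists_root_gt_of_tendsto_atBot {f : ℝ → ℝ} (hf : Continuous f) {a : ℝ} (ha : 0 < f a)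
    (hlim : Tendsto f atTop atBot) : ∃ x, a < x ∧ f x = 0 := by
  obtain ⟨b, hb, hab⟩ := ((hlim.eventually_lt_atBot 0).and (eventually_gt_atTop a)).exists
  obtain ⟨x, hx, hfx⟩ := intermediate_value_Ioo' hab.le hf.continuousOn ⟨hb, ha⟩
  exact ⟨x, hx.1, hfx⟩

theorem tendsto_cubic_atBot {a b c d : ℝ} (ha : a < 0) :
    Tendsto (fun x => d + c * x + b * x ^ 2 + a * x ^ 3) atTop atBot := by
  have hP := (C a * X ^ 3 + C b * X ^ 2 + C c * X + C d).tendsto_atBot_of_leadingCoeff_nonpos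
    (by rw [degree_cubic ha.ne]; norm_num) (by rw [leadingCoeff_cubic ha.ne]; exact ha.le)
  refine hP.congr fun x => ?_
  simp only [eval_add, eval_mul, eval_C, eval_pow, eval_X]
  ring

theorem continuous_p (α : ℝ) : Continuous (p α) := by
  unfold p; fun_prop

theorem c3_neg {α : ℝ} (hα0 : 0 < α) (hα1 : α ≤ 1) : c3 α < 0 := by
  have h4 : 0 ≤ α ^ 4 * (26 - 21 * α) := mul_nonneg (by positivity) (by linarith)
  have h2 : 0 ≤ α ^ 2 * (41 - 31 * α) := mul_nonneg (by positivity) (by linarith)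
  unfold c3
  nlinarith [pow_pos hα0 2]

theorem tendsto_p_atBot {α : ℝ} (hα0 : 0 < α) (hα1 : α ≤ 1) : Tendsto (p α) atTop atBot :=
  tendsto_cubic_atBot (c3_neg hα0 hα1)

theorem p_zero_pos (α : ℝ) : 0 < p α 0 := by
  simp only [p, c0]; nlinarith [sq_nonneg (4 * α + 1)]

theorem p_50_neg {α : ℝ} (hα0 : 0 < α) (hα1 : α ≤ 1) : p α 50 < 0 := by
  have ha : 0 ≤ α := hα0.le
  have hb : 0 ≤ 1 - α := by linarith
  unfold p c0 c1 c2 c3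
  -- `p α 50` has degree 7 in `α`; the hints are the Bernstein basis of degree 7 on `[0, 1]`.
  nlinarith [mul_nonneg (pow_nonneg ha 1) (pow_nonneg hb 6),
    mul_nonneg (pow_nonneg ha 2) (pow_nonneg hb 5),
    mul_nonneg (pow_nonneg ha 3) (pow_nonneg hb 4),
    mul_nonneg (pow_nonneg ha 4) (pow_nonneg hb 3),
    mul_nonneg (pow_nonneg ha 5) (pow_nonneg hb 2),
    mul_nonneg (pow_nonneg ha 6) (pow_nonneg hb 1),
    pow_nonneg ha 7, pow_nonneg hb 7]

theorem p_150_pos {α : ℝ} (hα0 : 0 < α) (hα : α ≤ 1 / 2) : 0 < p α 150 := by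
  unfold p c0 c1 c2 c3
  nlinarith [sq_nonneg α, sq_nonneg (1 - 2 * α), mul_pos hα0 hα0,
    sq_nonneg (α * (1 - 2 * α)), sq_nonneg (α ^ 2 * (1 - 2 * α)), sq_nonneg (α ^ 3)]

theorem p_105_sub_pos {α : ℝ} (hα : 1 / 2 < α) (hα1 : α ≤ 1) : 0 < p α (105 - 50 * α) := by
  unfold p c0 c1 c2 c3
  nlinarith [sq_nonneg (1 - α), sq_nonneg (α * (1 - α)), sq_nonneg (α ^ 2 * (1 - α)),
    sq_nonneg (α ^ 3 * (1 - α)), sq_nonneg (α ^ 4 * (1 - α)),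
    mul_pos (by linarith : (0 : ℝ) < 2 * α - 1) (by linarith : (0 : ℝ) < 2 - α),
    sq_nonneg ((2 * α - 1) * (1 - α)), sq_nonneg (α ^ 3 * (2 * α - 1))]

theorem p_y_pos {α : ℝ} (hα0 : 0 < α) (hα1 : α ≤ 1) : 0 < p α (y α) := by
  unfold y
  split_ifs with h
  · exact p_150_pos hα0 h
  · exact p_105_sub_pos (not_le.mp h) hα1

theorem fifty_lt_y {α : ℝ} (hα1 : α ≤ 1) : 50 < y α := by
  unfold y; split_ifs <;> linarith

/-- For every `α ∈ (0, 1]`, the cubic `p_α` has a root in `(0, 50)`,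
a root in `(50, y_α)` and a root in `(y_α, ∞)`. -/
theorem stmt18 (α : ℝ) (hα0 : 0 < α) (hα1 : α ≤ 1) :
    (∃ x : ℝ, 0 < x ∧ x < 50 ∧ p α x = 0) ∧
      (∃ x : ℝ, 50 < x ∧ x < y α ∧ p α x = 0) ∧
      (∃ x : ℝ, y α < x ∧ p α x = 0) := by
  obtain ⟨x₁, hx₁, hpx₁⟩ := intermediate_value_Ioo' (by norm_num : (0 : ℝ) ≤ 50)
    (continuous_p α).continuousOn ⟨p_50_neg hα0 hα1, p_zero_pos α⟩
  obtain ⟨x₂, hx₂, hpx₂⟩ := intermediate_value_Ioo (fifty_lt_y hα1).le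
    (continuous_p α).continuousOn ⟨p_50_neg hα0 hα1, p_y_pos hα0 hα1⟩
  exact ⟨⟨x₁, hx₁.1, hx₁.2, hpx₁⟩, ⟨x₂, hx₂.1, hx₂.2, hpx₂⟩,
    exists_root_gt_of_tendsto_atBot (continuous_p α) (p_y_pos hα0 hα1) (tendsto_p_atBot hα0 hα1)⟩
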